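/- arXiv:2005.13960 — 5 statements merged into one kernel-verified Lean document; each statement's English description precedes it below -/
import Mathlib

section
/- Let A be an n×n complex matrix with trace zero. Then (tr(AA*))² = |tr(A²)|² if and only if there exists θ ∈ ℝ such that e^{-iθ}·A is Hermitian (i.e., equals its own conjugate transpose). -/
open Matrix

lemma trace_mul_conjTranspose_eq (n : ℕ) (M : Matrix (Fin n) (Fin n) ℂ) :
    Matrix.trace (M * Mᴴ) = ((∑ i, ∑ j, Complex.normSq (M i j) : ℝ) : ℂ) := by
  simp only [Matrix.trace, Matrix.diag, Matrix.mul_apply, Matrix.conjTranspose_apply,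
    Complex.star_def, Complex.mul_conj]
  push_cast
  rfl

lemma conj_neg_ofReal_mul_I (x : ℝ) :
    (starRingEnd ℂ) (-(x : ℂ) * Complex.I) = (x : ℂ) * Complex.I := by
  rw [_root_.map_mul, map_neg, Complex.conj_ofReal, Complex.conj_I]
  ring

/-- For a trace-free `n×n` complex matrix `A`, one has
`(tr(AA*))² = |tr(A²)|²` iff `e^{-iθ}·A` is Hermitian for some real `θ`. -/
theorem stmt1 (n : ℕ) (A : Matrix (Fin n) (Fin n) ℂ) (htr : Matrix.trace A = 0) :
    (Matrix.trace (A * Aᴴ)).re ^ 2 = ‖Matrix.trace (A * A)‖ ^ 2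
      ↔ ∃ θ : ℝ, (Complex.exp (-(θ : ℂ) * Complex.I) • A).IsHermitian := by
  set t : ℝ := ∑ i, ∑ j, Complex.normSq (A i j) with ht_def
  have ht0 : 0 ≤ t :=
    Finset.sum_nonneg fun i _ => Finset.sum_nonneg fun j _ => Complex.normSq_nonneg _
  have htrace : Matrix.trace (A * Aᴴ) = (t : ℂ) := trace_mul_conjTranspose_eq n A
  constructor
  · intro h
    by_cases hA : A = 0
    · exact ⟨0, by simp [hA, Matrix.IsHermitian]⟩
    set u : EuclideanSpace ℂ (Fin n × Fin n) := WithLp.toLp 2 (fun p : Fin n × Fin n => A p.1 p.2) with hu_def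
    set v : EuclideanSpace ℂ (Fin n × Fin n) := WithLp.toLp 2 (fun p : Fin n × Fin n => Aᴴ p.1 p.2) with hv_def
    have hu0 : u ≠ 0 := by
      intro h0
      apply hA
      ext i j
      simpa using congrArg (fun w => w (i, j)) h0
    have hv0 : v ≠ 0 := by
      intro h0
      apply hA
      ext i j
      have := congrArg (fun w => w (j, i)) h0
      simp only [hv_def, Matrix.conjTranspose_apply, Pi.zero_apply] at this
      simpa using congrArg (starRingEnd ℂ) this
    have hnu : ‖u‖ = Real.sqrt t := by
      rw [EuclideanSpace.norm_eq]
      congr 1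
      rw [Fintype.sum_prod_type, ht_def]
      simp [hu_def, Complex.sq_norm]
    have hnv : ‖v‖ = Real.sqrt t := by
      rw [EuclideanSpace.norm_eq]
      congr 1
      rw [Fintype.sum_prod_type, ht_def]
      rw [Finset.sum_comm]
      simp [hv_def, Complex.sq_norm]
    have hinner : (inner ℂ u v : ℂ) = (starRingEnd ℂ) (Matrix.trace (A * A)) := by
      simp only [PiLp.inner_apply, RCLike.inner_apply', hu_def, hv_def,
        Matrix.conjTranspose_apply]
      rw [Matrix.trace]
      simp only [Matrix.diag, Matrix.mul_apply, map_sum, _root_.map_mul]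
      rw [Fintype.sum_prod_type]
      simp [Complex.star_def]
    have hnorm_inner : ‖(inner ℂ u v : ℂ)‖ = ‖Matrix.trace (A * A)‖ := by
      rw [hinner]
      simp
    have h1 : (Matrix.trace (A * Aᴴ)).re = t := by rw [htrace]; exact Complex.ofReal_re t
    have heq : ‖(inner ℂ u v : ℂ)‖ = ‖u‖ * ‖v‖ := by
      have h2 : ‖u‖ * ‖v‖ = t := by rw [hnu, hnv, Real.mul_self_sqrt ht0]
      rw [← hnorm_inner, h1] at h
      rw [h2]
      exact ((pow_left_inj₀ ht0 (norm_nonneg _) two_ne_zero).mp h).symm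
    obtain ⟨r, hr0, hr⟩ := (norm_inner_eq_norm_iff hu0 hv0).mp heq
    have hAH : Aᴴ = r • A := by
      ext i j
      have := congrArg (fun w => w (i, j)) hr
      simpa [hv_def, hu_def] using this
    obtain ⟨i, j, hij⟩ : ∃ i j, A i j ≠ 0 := by
      by_contra hc
      push_neg at hc
      exact hA (by ext i j; simpa using hc i j)
    have h1' : A = ((starRingEnd ℂ) r * r) • A := by
      conv_lhs => rw [← Matrix.conjTranspose_conjTranspose A]
      rw [hAH, Matrix.conjTranspose_smul, hAH, smul_smul]
      rfl
    have hc1 : (starRingEnd ℂ) r * r = 1 := by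
      have h2 : A i j = ((starRingEnd ℂ) r * r) * A i j := by
        have := congrFun (congrFun h1' i) j
        simpa using this
      have h3 : A i j * 1 = A i j * ((starRingEnd ℂ) r * r) := by
        rw [mul_one]; linear_combination h2
      exact (mul_left_cancel₀ hij h3).symm
    have habs : ‖r‖ = 1 := by
      have hn : (Complex.normSq r : ℂ) = 1 := by
        rw [Complex.normSq_eq_conj_mul_self, hc1]
      have hn' : Complex.normSq r = 1 := by exact_mod_cast hn
      rw [← Complex.sq_norm] at hn'
      nlinarith [norm_nonneg r]
    obtain ⟨φ, hφ⟩ : ∃ φ : ℝ, Complex.exp ((φ : ℂ) * Complex.I) = r := by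
      refine ⟨Complex.arg r, ?_⟩
      have := Complex.norm_mul_exp_arg_mul_I r
      rwa [habs, Complex.ofReal_one, one_mul] at this
    refine ⟨-φ / 2, ?_⟩
    unfold Matrix.IsHermitian
    rw [Matrix.conjTranspose_smul, hAH, smul_smul]
    congr 1
    rw [Complex.star_def, ← Complex.exp_conj, conj_neg_ofReal_mul_I, ← hφ, ← Complex.exp_add]
    congr 1
    push_cast
    ring
  · rintro ⟨θ, hθ⟩
    have h1 : Complex.exp ((θ : ℂ) * Complex.I) • Aᴴ =
        Complex.exp (-(θ : ℂ) * Complex.I) • A := by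
      have := hθ
      rw [Matrix.IsHermitian, Matrix.conjTranspose_smul, Complex.star_def,
        ← Complex.exp_conj, conj_neg_ofReal_mul_I] at this
      exact this
    have hB : Aᴴ = Complex.exp (-2 * (θ : ℂ) * Complex.I) • A := by
      have h2 := congrArg (fun M => Complex.exp (-(θ : ℂ) * Complex.I) • M) h1
      simp only [smul_smul, ← Complex.exp_add] at h2
      rw [show -(θ : ℂ) * Complex.I + (θ : ℂ) * Complex.I = 0 by ring, Complex.exp_zero,
        one_smul] at h2
      rw [h2]
      congr 1
      ring
    have h3 : (t : ℂ) = Complex.exp (-2 * (θ : ℂ) * Complex.I) * Matrix.trace (A * A) := by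
      rw [← htrace, hB, Matrix.mul_smul, Matrix.trace_smul, smul_eq_mul]
    have habs : ‖Matrix.trace (A * A)‖ = t := by
      have h4 := congrArg (‖·‖) h3
      have hre : (-2 * (θ : ℂ) * Complex.I).re = 0 := by simp
      rw [norm_mul, Complex.norm_exp, hre, Real.exp_zero, one_mul,
        Complex.norm_real, Real.norm_eq_abs, abs_of_nonneg ht0] at h4
      linarith
    rw [htrace, habs]
    simp
end

section
/- Let D = diag(λ₁, …, λₙ) be a diagonal n×n complex matrix. Then the conjugacy class {g·D·g⁻¹ : g an invertible n×n complex matrix} is a closed subset of the space of n×n complex matrices. -/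
open Matrix Polynomial

namespace Stmt2Aux

variable {n : ℕ}

/-- The squarefree polynomial with roots the distinct values of `lam`. -/
noncomputable def q (lam : Fin n → ℂ) : Polynomial ℂ :=
  ∏ μ ∈ Finset.univ.image lam, (X - C μ)

lemma q_squarefree (lam : Fin n → ℂ) : Squarefree (q lam) :=
  (Polynomial.separable_prod_X_sub_C_iff'.mpr fun _ _ _ _ h => h).squarefree

lemma aeval_diag_q (lam : Fin n → ℂ) : aeval (diagonal lam) (q lam) = 0 := by
  have h : diagonal lam = Matrix.diagonalAlgHom (n := Fin n) (α := ℂ) ℂ lam := rfl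
  rw [h, aeval_algHom_apply]
  have : aeval lam (q lam) = 0 := by
    funext i
    have hi : (aeval lam (q lam)) i = aeval (lam i) (q lam) :=
      (aeval_algHom_apply (Pi.evalAlgHom ℂ (fun _ : Fin n => ℂ) i) lam (q lam)).symm
    rw [hi, q, map_prod]
    refine Finset.prod_eq_zero (Finset.mem_image_of_mem lam (Finset.mem_univ i)) ?_
    simp
  rw [this, map_zero]

lemma aeval_conj (u : (Matrix (Fin n) (Fin n) ℂ)ˣ) (D : Matrix (Fin n) (Fin n) ℂ)
    (p : Polynomial ℂ) :
    aeval ((u : Matrix (Fin n) (Fin n) ℂ) * D * (↑u⁻¹ : Matrix (Fin n) (Fin n) ℂ)) p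
      = (u : Matrix (Fin n) (Fin n) ℂ) * (aeval D p : Matrix (Fin n) (Fin n) ℂ)
        * (↑u⁻¹ : Matrix (Fin n) (Fin n) ℂ) := by
  induction p using Polynomial.induction_on' with
  | add p r hp hr => rw [map_add, hp, hr, map_add, mul_add, add_mul]
  | monomial k c =>
    rw [aeval_monomial, aeval_monomial, Units.conj_pow]
    simp only [mul_assoc, Algebra.left_comm]

lemma smul_one_sub_conj (u : (Matrix (Fin n) (Fin n) ℂ)ˣ) (t : ℂ)
    (D : Matrix (Fin n) (Fin n) ℂ) :
    t • (1 : Matrix (Fin n) (Fin n) ℂ)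
        - (u : Matrix (Fin n) (Fin n) ℂ) * D * (↑u⁻¹ : Matrix (Fin n) (Fin n) ℂ)
      = (u : Matrix (Fin n) (Fin n) ℂ) * (t • (1 : Matrix (Fin n) (Fin n) ℂ) - D)
        * (↑u⁻¹ : Matrix (Fin n) (Fin n) ℂ) := by
  rw [mul_sub, sub_mul]
  congr 1
  rw [mul_smul_comm, smul_mul_assoc, mul_one, Units.mul_inv]

lemma smul_one_sub_diagonal (t : ℂ) (d : Fin n → ℂ) :
    t • (1 : Matrix (Fin n) (Fin n) ℂ) - diagonal d = diagonal (fun i => t - d i) := by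
  ext i j
  by_cases hij : i = j <;>
    simp [Matrix.diagonal_apply, Matrix.one_apply, hij]

lemma det_smul_one_sub_diagonal (t : ℂ) (d : Fin n → ℂ) :
    (t • (1 : Matrix (Fin n) (Fin n) ℂ) - diagonal d).det = ∏ i, (t - d i) := by
  rw [smul_one_sub_diagonal, det_diagonal]

lemma conj_of_eigenbasis (B : Matrix (Fin n) (Fin n) ℂ) (b : Module.Basis (Fin n) ℂ (Fin n → ℂ))
    (d : Fin n → ℂ) (h : ∀ j, Matrix.toLin' B (b j) = d j • b j) :
    ∃ g : Matrix (Fin n) (Fin n) ℂ, IsUnit g ∧ B = g * diagonal d * g⁻¹ := by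
  set e := Pi.basisFun ℂ (Fin n)
  have hM : LinearMap.toMatrix b b (Matrix.toLin' B) = diagonal d := by
    ext i j
    rw [LinearMap.toMatrix_apply, h j, _root_.map_smul, Module.Basis.repr_self]
    rcases eq_or_ne i j with hij | hij
    · subst hij; simp [Matrix.diagonal_apply, Finsupp.single_apply]
    · simp [Matrix.diagonal_apply, Finsupp.single_apply, hij, Ne.symm hij]
  have hB : e.toMatrix b * diagonal d * b.toMatrix e = B := by
    rw [← hM, basis_toMatrix_mul_linearMap_toMatrix_mul_basis_toMatrix,
      LinearMap.toMatrix_eq_toMatrix', LinearMap.toMatrix'_toLin']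
  have h1 : e.toMatrix b * b.toMatrix e = 1 := Module.Basis.toMatrix_mul_toMatrix_flip _ _
  have h2 : b.toMatrix e * e.toMatrix b = 1 := Module.Basis.toMatrix_mul_toMatrix_flip _ _
  refine ⟨e.toMatrix b, ⟨⟨e.toMatrix b, b.toMatrix e, h1, h2⟩, rfl⟩, ?_⟩
  rw [Matrix.inv_eq_right_inv h1, hB]

lemma multiset_eq (d lam : Fin n → ℂ)
    (h : ∀ t : ℂ, ∏ i, (t - d i) = ∏ i, (t - lam i)) :
    Multiset.map d Finset.univ.val = Multiset.map lam Finset.univ.val := by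
  have key : ∀ c : Fin n → ℂ,
      (∏ i, (X - C (c i))).roots = Multiset.map c Finset.univ.val := by
    intro c
    have : (∏ i, (X - C (c i)))
        = (Multiset.map (fun a => X - C a) (Multiset.map c Finset.univ.val)).prod := by
      rw [Multiset.map_map]
      rfl
    rw [this, Polynomial.roots_multiset_prod_X_sub_C]
  have hp : (∏ i, (X - C (d i))) = ∏ i, (X - C (lam i)) := by
    apply Polynomial.funext
    intro t
    simpa [eval_prod] using h t
  have := congrArg Polynomial.roots hp
  rwa [key, key] at this

lemma exists_perm (d lam : Fin n → ℂ)
    (h : Multiset.map d Finset.univ.val = Multiset.map lam Finset.univ.val) :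
    ∃ σ : Fin n ≃ Fin n, ∀ i, lam (σ i) = d i := by
  classical
  have key : ∀ (c : ℂ) (v : Fin n → ℂ),
      Multiset.count c (Multiset.map v Finset.univ.val) = Fintype.card {i // v i = c} := by
    intro c v
    rw [Multiset.count_map, Fintype.card_subtype, Finset.card_def, Finset.filter_val]
    exact congrArg Multiset.card (Multiset.filter_congr fun x _ => ⟨Eq.symm, Eq.symm⟩)
  have hcard : ∀ c : ℂ, Fintype.card {i // d i = c} = Fintype.card {i // lam i = c} := by
    intro c
    have hc := congrArg (Multiset.count c) h
    rwa [key c d, key c lam] at hc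
  let e : ∀ c : ℂ, {i // d i = c} ≃ {i // lam i = c} := fun c => Fintype.equivOfCardEq (hcard c)
  exact ⟨Equiv.ofFiberEquiv e, fun i => Equiv.ofFiberEquiv_map e i⟩

end Stmt2Aux

open Stmt2Aux

/-- the conjugacy class of a diagonal complex matrix is closed
in the space of `n×n` complex matrices. -/
theorem stmt2 (n : ℕ) (lam : Fin n → ℂ) :
    IsClosed {B : Matrix (Fin n) (Fin n) ℂ |
      ∃ g : Matrix (Fin n) (Fin n) ℂ, IsUnit g ∧ B = g * Matrix.diagonal lam * g⁻¹} := by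
  classical
  have hset : {B : Matrix (Fin n) (Fin n) ℂ |
        ∃ g : Matrix (Fin n) (Fin n) ℂ, IsUnit g ∧ B = g * Matrix.diagonal lam * g⁻¹}
      = {B : Matrix (Fin n) (Fin n) ℂ | aeval B (q lam) = 0} ∩
        ⋂ t : ℂ, {B : Matrix (Fin n) (Fin n) ℂ |
          (t • (1 : Matrix (Fin n) (Fin n) ℂ) - B).det = ∏ i, (t - lam i)} := by
    ext B
    simp only [Set.mem_setOf_eq, Set.mem_inter_iff, Set.mem_iInter]
    constructor
    · rintro ⟨g, hg, rfl⟩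
      obtain ⟨u, rfl⟩ := hg
      rw [← Matrix.coe_units_inv]
      refine ⟨by rw [aeval_conj, aeval_diag_q, mul_zero, zero_mul], fun t => ?_⟩
      rw [smul_one_sub_conj, Matrix.det_units_conj, det_smul_one_sub_diagonal]
    · rintro ⟨h1, h2⟩
      set f := Matrix.toLin' B with hf
      have hfq : aeval f (q lam) = 0 := by
        have : f = Matrix.toLinAlgEquiv'.toAlgHom B := rfl
        rw [this, aeval_algHom_apply, h1, map_zero]
      have hss := (Module.End.isSemisimple_of_squarefree_aeval_eq_zero
        (q_squarefree lam) hfq).isFinitelySemisimple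
      have htop : ⨆ μ : ℂ, Module.End.eigenspace f μ = ⊤ := by
        have h := Module.End.iSup_maxGenEigenspace_eq_top f
        simp_rw [← hss.maxGenEigenspace_eq_eigenspace]
        exact h
      have hspan : Submodule.span ℂ
          (⋃ μ : ℂ, (Module.End.eigenspace f μ : Set (Fin n → ℂ))) = ⊤ := by
        rw [Submodule.span_iUnion]
        simp_rw [Submodule.span_eq]
        exact htop
      obtain ⟨s, hs_sub, hs_span, hs_li⟩ := exists_linearIndependent ℂ
        (⋃ μ : ℂ, (Module.End.eigenspace f μ : Set (Fin n → ℂ)))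
      rw [hspan] at hs_span
      let b0 : Module.Basis s ℂ (Fin n → ℂ) :=
        Module.Basis.mk hs_li (by rw [Subtype.range_coe, hs_span])
      haveI : Fintype s := FiniteDimensional.fintypeBasisIndex b0
      have hcard : Fintype.card s = n := by
        rw [← Module.finrank_eq_card_basis b0, Module.finrank_fin_fun]
      let e0 : s ≃ Fin n := Fintype.equivFinOfCardEq hcard
      let b1 : Module.Basis (Fin n) ℂ (Fin n → ℂ) := b0.reindex e0
      have hev : ∀ j : Fin n, ∃ μ : ℂ, f (b1 j) = μ • b1 j := by
        intro j
        have hmem : (b1 j : Fin n → ℂ) ∈ ⋃ μ : ℂ, (Module.End.eigenspace f μ : Set (Fin n → ℂ)) := by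
          have : b1 j = ((e0.symm j : s) : Fin n → ℂ) := by
            rw [Module.Basis.reindex_apply, Module.Basis.mk_apply]
          rw [this]
          exact hs_sub (e0.symm j).2
        obtain ⟨_, ⟨μ, rfl⟩, hμ⟩ := hmem
        exact ⟨μ, Module.End.mem_eigenspace_iff.mp hμ⟩
      choose d1 hd1 using hev
      obtain ⟨g1, hg1, hBg1⟩ := conj_of_eigenbasis B b1 d1 hd1
      have hdet : ∀ t : ℂ, ∏ i, (t - d1 i) = ∏ i, (t - lam i) := by
        intro t
        rw [← h2 t, hBg1]
        obtain ⟨u, rfl⟩ := hg1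
        rw [← Matrix.coe_units_inv, smul_one_sub_conj, Matrix.det_units_conj,
          det_smul_one_sub_diagonal]
      obtain ⟨σ, hσ⟩ := exists_perm d1 lam (multiset_eq d1 lam hdet)
      let b2 : Module.Basis (Fin n) ℂ (Fin n → ℂ) := b1.reindex σ
      have hd2 : ∀ j : Fin n, f (b2 j) = lam j • b2 j := by
        intro j
        have : b2 j = b1 (σ.symm j) := b1.reindex_apply σ j
        rw [this, hd1 (σ.symm j)]
        congr 1
        rw [← hσ (σ.symm j), Equiv.apply_symm_apply]
      exact conj_of_eigenbasis B b2 lam hd2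
  rw [hset]
  apply IsClosed.inter
  · have hc : Continuous fun B : Matrix (Fin n) (Fin n) ℂ => aeval B (q lam) := by
      have hrep : (fun B : Matrix (Fin n) (Fin n) ℂ => aeval B (q lam))
          = fun B => ∑ k ∈ Finset.range ((q lam).natDegree + 1),
              (q lam).coeff k • B ^ k := by
        funext B
        exact Polynomial.aeval_eq_sum_range _
      rw [hrep]
      exact continuous_finset_sum _ fun k _ => (continuous_const_smul ((q lam).coeff k)).comp (continuous_pow k)
    exact isClosed_singleton.preimage hc
  · refine isClosed_iInter fun t => ?_
    have hc : Continuous fun B : Matrix (Fin n) (Fin n) ℂ =>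
        (t • (1 : Matrix (Fin n) (Fin n) ℂ) - B).det :=
      (continuous_const.sub continuous_id).matrix_det
    exact isClosed_singleton.preimage hc
end

section
/- Let n ≥ 2 and let M = a·eₙ + b·ẽₙ + c·xₙ with a, b, c ∈ ℂ not all zero. Then either there exists t ∈ ℂ, t ≠ 0, such that the characteristic polynomial of M equals ∏_{k=1}^{n} (X − t·(n+1−2k)) (i.e., the eigenvalues of M are t(n−1), t(n−3), …, t(1−n)), or M is nilpotent with M^{n−1} ≠ 0. -/
open Matrix Polynomial Finset

/-- `eₙ`: the `n×n` matrix with `(eₙ)_{k,k+1} = √(k(n−k))` (1-indexed) and zeros elsewhere. -/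
noncomputable def eMat (k : ℕ) : Matrix (Fin k) (Fin k) ℂ :=
  Matrix.of fun i j =>
    if (j : ℕ) = (i : ℕ) + 1 then
      (Real.sqrt (((i : ℕ) + 1) * (k - ((i : ℕ) + 1))) : ℂ)
    else 0

/-- `xₙ = diag(n−1, n−3, …, 1−n)`. -/
noncomputable def xMat (k : ℕ) : Matrix (Fin k) (Fin k) ℂ :=
  Matrix.diagonal fun i => (((k : ℤ) - 1 - 2 * (i : ℕ) : ℤ) : ℂ)

section entry
variable {n : ℕ}

lemma eMat_apply (i j : Fin n) : eMat n i j =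
    if (j : ℕ) = (i : ℕ) + 1 then
      ((Real.sqrt (((i : ℕ) + 1) * ((n : ℝ) - ((i : ℕ) + 1))) : ℝ) : ℂ) else 0 := rfl

lemma sq_entry (i : Fin n) :
    ((Real.sqrt (((i : ℕ) + 1) * ((n : ℝ) - ((i : ℕ) + 1))) : ℝ) : ℂ)
      * ((Real.sqrt (((i : ℕ) + 1) * ((n : ℝ) - ((i : ℕ) + 1))) : ℝ) : ℂ)
      = ((((i : ℕ) + 1) * ((n : ℝ) - ((i : ℕ) + 1)) : ℝ) : ℂ) := by
  have h0 : (0:ℝ) ≤ (((i : ℕ) + 1) * ((n : ℝ) - ((i : ℕ) + 1))) := by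
    have := i.isLt
    have h1 : ((i:ℕ) : ℝ) + 1 ≤ (n:ℝ) := by exact_mod_cast this
    nlinarith [Nat.cast_nonneg (α := ℝ) (i:ℕ)]
  rw [← Complex.ofReal_mul, Real.mul_self_sqrt h0]

lemma EEt : eMat n * (eMat n)ᵀ =
    Matrix.diagonal (fun i : Fin n =>
      (((((i:ℕ)+1) * ((n:ℝ) - ((i:ℕ)+1))) : ℝ) : ℂ)) := by
  ext i j
  rw [mul_apply]
  by_cases hij : i = j
  · subst hij
    rw [diagonal_apply_eq]
    by_cases h : (i:ℕ)+1 < n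
    · rw [Finset.sum_eq_single (⟨(i:ℕ)+1, h⟩ : Fin n)]
      · rw [transpose_apply, eMat_apply, if_pos rfl, sq_entry]
      · intro b _ hb
        rw [transpose_apply, eMat_apply, if_neg, zero_mul]
        intro hc; exact hb (Fin.ext hc)
      · intro hmem; exact absurd (Finset.mem_univ _) hmem
    · have hi : (i:ℕ)+1 = n := by omega
      have hz : ((n:ℝ) - ((i:ℕ)+1)) = 0 := by
        have : ((i:ℕ):ℝ) + 1 = (n:ℝ) := by exact_mod_cast hi
        linarith
      conv_rhs => rw [hz, mul_zero, Complex.ofReal_zero]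
      apply Finset.sum_eq_zero
      intro k _
      rw [transpose_apply, eMat_apply, if_neg, zero_mul]
      intro hc; omega
  · rw [diagonal_apply_ne _ hij]
    apply Finset.sum_eq_zero
    intro k _
    rw [eMat_apply, transpose_apply, eMat_apply]
    split_ifs with h1 h2
    · exact absurd (Fin.ext (by omega) : i = j) hij
    · rw [mul_zero]
    · rw [zero_mul]
    · rw [zero_mul]

lemma EtE : (eMat n)ᵀ * eMat n =
    Matrix.diagonal (fun i : Fin n => ((((i:ℕ)) * ((n:ℝ) - (i:ℕ)) : ℝ) : ℂ)) := by
  ext i j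
  rw [mul_apply]
  by_cases hij : i = j
  · subst hij
    rw [diagonal_apply_eq]
    by_cases h : 0 < (i:ℕ)
    · have hlt : (i:ℕ)-1 < n := by omega
      rw [Finset.sum_eq_single (⟨(i:ℕ)-1, hlt⟩ : Fin n)]
      · have hcond : (i:ℕ) = ((⟨(i:ℕ)-1, hlt⟩ : Fin n) : ℕ) + 1 := by simp; omega
        rw [transpose_apply, eMat_apply, if_pos hcond, sq_entry]
        have hc : ((((⟨(i:ℕ)-1, hlt⟩ : Fin n) : ℕ) : ℝ) + 1) = ((i:ℕ) : ℝ) := by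
          have : ((i:ℕ)-1) + 1 = (i:ℕ) := by omega
          exact_mod_cast congrArg (Nat.cast : ℕ → ℝ) this
        rw [show (((⟨(i:ℕ)-1, hlt⟩ : Fin n) : ℕ) : ℝ) = ((i:ℕ):ℝ) - 1 by rw [← hc]; ring]
        norm_num
      · intro b _ hb
        rw [transpose_apply, eMat_apply, if_neg, zero_mul]
        intro hc
        exact hb (Fin.ext (show (b:ℕ) = (i:ℕ)-1 by omega))
      · intro hmem; exact absurd (Finset.mem_univ _) hmem
    · have hi : (i:ℕ) = 0 := by omega
      rw [show (((i:ℕ)):ℝ) = 0 by exact_mod_cast hi, zero_mul, Complex.ofReal_zero]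
      apply Finset.sum_eq_zero
      intro k _
      rw [transpose_apply, eMat_apply, if_neg, zero_mul]
      omega
  · rw [diagonal_apply_ne _ hij]
    apply Finset.sum_eq_zero
    intro k _
    rw [transpose_apply, eMat_apply, eMat_apply]
    split_ifs with h1 h2
    · exact absurd (Fin.ext (by omega) : i = j) hij
    · rw [mul_zero]
    · rw [zero_mul]
    · rw [zero_mul]

lemma rel1 : eMat n * (eMat n)ᵀ - (eMat n)ᵀ * eMat n = xMat n := by
  rw [EEt, EtE, xMat, diagonal_sub]
  refine congrArg Matrix.diagonal (funext fun i => ?_)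
  show ((((i:ℕ)+1) * ((n:ℝ) - ((i:ℕ)+1)) : ℝ) : ℂ) - (((i:ℕ) * ((n:ℝ) - (i:ℕ)) : ℝ) : ℂ)
      = (((n : ℤ) - 1 - 2 * (i : ℕ) : ℤ) : ℂ)
  push_cast
  ring

lemma rel2 : (eMat n)ᵀ * xMat n - xMat n * (eMat n)ᵀ = (2:ℂ) • (eMat n)ᵀ := by
  ext i j
  simp only [Matrix.sub_apply, Matrix.smul_apply, xMat, mul_diagonal, diagonal_mul, transpose_apply,
    eMat_apply]
  split_ifs with h
  · rw [h]
    push_cast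
    rw [smul_eq_mul]
    ring
  · simp

lemma eMat_pow_apply_ne (m : ℕ) : ∀ i j : Fin n, (j : ℕ) ≠ (i : ℕ) + m → (eMat n ^ m) i j = 0 := by
  induction m with
  | zero =>
    intro i j hij
    rw [pow_zero]
    exact one_apply_ne fun h => hij (by rw [h]; ring)
  | succ m ih =>
    intro i j hij
    rw [pow_succ, mul_apply]
    apply Finset.sum_eq_zero
    intro k _
    by_cases hk : (k:ℕ) = (i:ℕ) + m
    · rw [eMat_apply, if_neg (by omega), mul_zero]
    · rw [ih i k hk, zero_mul]

lemma eMat_pow_corner_ne (m : ℕ) (h : m < n) :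
    (eMat n ^ m) ⟨0, by omega⟩ ⟨m, h⟩ ≠ 0 := by
  induction m with
  | zero => simp [pow_zero, one_apply]
  | succ m ih =>
    have hm : m < n := by omega
    rw [pow_succ, mul_apply]
    rw [Finset.sum_eq_single (⟨m, hm⟩ : Fin n)]
    · apply mul_ne_zero (ih hm)
      rw [eMat_apply, if_pos rfl]
      have h1 : (0:ℝ) < ((m:ℕ) + 1) * ((n : ℝ) - ((m:ℕ) + 1)) := by
        have : ((m:ℝ)) + 1 < (n:ℝ) := by exact_mod_cast h
        have h2 : (0:ℝ) < (m:ℝ) + 1 := by positivity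
        nlinarith
      simpa using (Real.sqrt_pos.2 h1).ne'
    · intro b _ hb
      rw [eMat_pow_apply_ne m _ _ (fun hc => hb (Fin.ext (by simpa using hc))), zero_mul]
    · intro hmem; exact absurd (Finset.mem_univ _) hmem

lemma eMat_pow_n : eMat n ^ n = 0 := by
  ext i j
  rw [eMat_pow_apply_ne n i j (by omega), Matrix.zero_apply]

lemma eMat_pow_pred_ne (hn : 0 < n) : eMat n ^ (n-1) ≠ 0 := by
  intro hcon
  have h := eMat_pow_corner_ne (n := n) (n-1) (by omega)
  apply h
  rw [hcon]
  exact zero_apply _ _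

end entry

section conj
variable {R : Type*} [Ring R] [Algebra ℂ R]

lemma pow_mul_formula {N M A B : R}
    (h1 : N * M = M * N + A) (h2 : N * A = A * N + B) (h3 : N * B = B * N) :
    ∀ k : ℕ, N ^ k * M = M * N ^ k + (k : ℂ) • (A * N ^ (k - 1))
      + ((k.choose 2 : ℕ) : ℂ) • (B * N ^ (k - 2)) := by
  have claim2 : ∀ k : ℕ, N ^ (k+2) * M = M * N ^ (k+2) + (((k+2:ℕ)) : ℂ) • (A * N ^ (k+1))
      + (((k+2).choose 2 : ℕ) : ℂ) • (B * N ^ k) := by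
    intro k
    induction k with
    | zero =>
      have c1 : N ^ (0+2) * M = M * N^(0+2) + A * N + (A * N + B) := by
        calc N ^ (0+2) * M = N * (N * M) := by rw [pow_two, mul_assoc]
        _ = N * (M * N) + N * A := by rw [h1, mul_add]
        _ = (N * M) * N + (A * N + B) := by rw [mul_assoc, h2]
        _ = (M * N + A) * N + (A * N + B) := by rw [h1]
        _ = M * N^(0+2) + A * N + (A * N + B) := by
              rw [add_mul, mul_assoc, ← pow_two]
      rw [c1]
      norm_num [two_smul, pow_one]
      abel
    | succ k ih =>
      have c1 : N ^ (k+3) * M = N * (N ^ (k+2) * M) := by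
        rw [← mul_assoc, ← pow_succ']
      have e1 : N * (M * N^(k+2)) = M * N^(k+3) + A * N^(k+2) := by
        rw [← mul_assoc, h1, add_mul, mul_assoc, ← pow_succ']
      have e2 : N * (A * N^(k+1)) = A * N^(k+2) + B * N^(k+1) := by
        rw [← mul_assoc, h2, add_mul, mul_assoc, ← pow_succ']
      have e3 : N * (B * N^k) = B * N^(k+1) := by
        rw [← mul_assoc, h3, mul_assoc, ← pow_succ']
      have hch : ((((k+3).choose 2 : ℕ)) : ℂ) = ((k+2).choose 2 : ℕ) + ((k:ℂ)+2) := by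
        rw [Nat.choose_succ_succ (k+2) 1, Nat.choose_one_right]
        push_cast; ring
      show N ^ (k+3) * M = M * N ^ (k+3) + (((k+3:ℕ)) : ℂ) • (A * N ^ (k+2))
        + (((k+3).choose 2 : ℕ) : ℂ) • (B * N ^ (k+1))
      rw [c1, ih, mul_add, mul_add, mul_smul_comm, mul_smul_comm, e1, e2, e3, hch]
      push_cast
      match_scalars <;> ring
  intro k
  match k with
  | 0 => simp
  | 1 => simpa using h1
  | (k+2) => simpa using claim2 k

lemma conj_exists {N M A B : R} {m : ℕ}
    (h1 : N * M = M * N + A) (h2 : N * A = A * N + B) (h3 : N * B = B * N)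
    (hN : N ^ m = 0) :
    ∃ P Q : R, P * Q = 1 ∧ Q * P = 1 ∧ P * M = (M + A + (2⁻¹ : ℂ) • B) * P := by
  set f : ℕ → R := fun k => ((k.factorial : ℂ)⁻¹) • N ^ k with hf
  set P : R := ∑ k ∈ range (m+2), f k with hP
  have hNm1 : N ^ (m+1) = 0 := by rw [pow_succ, hN, zero_mul]
  have hfm : f m = 0 := by rw [hf]; simp [hN]
  have hfm1 : f (m+1) = 0 := by rw [hf]; simp [hNm1]
  have hP1 : ∑ k ∈ range (m+1), f k = P := by
    rw [hP, Finset.sum_range_succ _ (m+1), hfm1, add_zero]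
  have hP2 : ∑ k ∈ range m, f k = P := by
    rw [← hP1, Finset.sum_range_succ _ m, hfm, add_zero]
  have hunit : IsUnit P := by
    have hsplit : P = 1 + N * (∑ k ∈ range (m+1), (((k+1).factorial : ℂ)⁻¹) • N ^ k) := by
      rw [hP, Finset.sum_range_succ', Finset.mul_sum]
      simp only [hf, Nat.factorial_zero, Nat.cast_one, inv_one, pow_zero, one_smul,
        mul_smul_comm, ← pow_succ']
      rw [add_comm]
    set S := ∑ k ∈ range (m+1), (((k+1).factorial : ℂ)⁻¹) • N ^ k with hS
    have hcomm : Commute N S :=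
      Commute.sum_right _ _ _ (fun k _ => ((Commute.refl N).pow_right k).smul_right _)
    have hnil : IsNilpotent (N * S) := ⟨m, by rw [hcomm.mul_pow, hN, zero_mul]⟩
    rw [hsplit]
    exact hnil.isUnit_one_add
  have hfacne : ∀ k : ℕ, ((k.factorial : ℂ)) ≠ 0 :=
    fun k => Nat.cast_ne_zero.2 k.factorial_ne_zero
  have hco1 : ∀ k : ℕ, (((k+1).factorial : ℂ))⁻¹ * ((k:ℂ)+1) = ((k.factorial : ℂ))⁻¹ := by
    intro k
    have h2 : (((k+1).factorial:ℂ)) = ((k:ℂ)+1) * (k.factorial:ℂ) := by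
      exact_mod_cast congrArg (Nat.cast : ℕ → ℂ) (Nat.factorial_succ k)
    have h3' : ((k:ℂ)+1) ≠ 0 := Nat.cast_add_one_ne_zero k
    rw [h2, mul_inv]
    field_simp
  have hco2 : ∀ k : ℕ, (((k+2).factorial : ℂ))⁻¹ * (((k+2).choose 2 : ℕ):ℂ)
      = 2⁻¹ * ((k.factorial : ℂ))⁻¹ := by
    intro k
    have hn : (k+2).choose 2 * (2*1) * k.factorial = (k+2).factorial := by
      have := Nat.choose_mul_factorial_mul_factorial (show 2 ≤ k+2 by omega)
      simpa [Nat.factorial] using this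
    have hc : (((k+2).choose 2 : ℕ):ℂ) * 2 * (k.factorial:ℂ) = ((k+2).factorial : ℂ) := by
      exact_mod_cast congrArg (Nat.cast : ℕ → ℂ) (by simpa [mul_one] using hn)
    have hchne : (((k+2).choose 2:ℕ):ℂ) ≠ 0 :=
      Nat.cast_ne_zero.2 (Nat.choose_pos (by omega)).ne'
    rw [hc.symm, mul_inv, mul_inv]
    field_simp
  have key : P * M = (M + A + (2⁻¹ : ℂ) • B) * P := by
    have lhs : ∀ k, f k * M = (k.factorial:ℂ)⁻¹ • (M * N^k)
        + ((k.factorial:ℂ)⁻¹ * k) • (A * N^(k-1))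
        + ((k.factorial:ℂ)⁻¹ * ((k.choose 2 : ℕ):ℂ)) • (B * N^(k-2)) := by
      intro k
      rw [hf]
      rw [smul_mul_assoc, pow_mul_formula h1 h2 h3 k, smul_add, smul_add, smul_smul, smul_smul]
    rw [hP, Finset.sum_mul, Finset.sum_congr rfl (fun k _ => lhs k),
      Finset.sum_add_distrib, Finset.sum_add_distrib]
    have s1 : ∑ k ∈ range (m+2), (k.factorial:ℂ)⁻¹ • (M * N^k) = M * P := by
      rw [hP, Finset.mul_sum]
      exact Finset.sum_congr rfl fun k _ => (mul_smul_comm _ _ _).symm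
    have s2 : ∑ k ∈ range (m+2), ((k.factorial:ℂ)⁻¹ * k) • (A * N^(k-1)) = A * P := by
      rw [Finset.sum_range_succ']
      simp only [Nat.cast_zero, mul_zero, zero_smul, add_zero]
      have : ∀ k ∈ range (m+1), (((k+1).factorial:ℂ)⁻¹ * ((k+1:ℕ):ℂ)) • (A * N^(k+1-1))
          = A * f k := by
        intro k _
        have : (((k+1):ℕ):ℂ) = (k:ℂ)+1 := by push_cast; ring
        rw [Nat.add_sub_cancel, this, hco1, hf, mul_smul_comm]
      rw [Finset.sum_congr rfl this, ← Finset.mul_sum, hP1]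
    have s3 : ∑ k ∈ range (m+2), ((k.factorial:ℂ)⁻¹ * ((k.choose 2 : ℕ):ℂ)) • (B * N^(k-2))
        = (2⁻¹:ℂ) • (B * P) := by
      rw [Finset.sum_range_succ']
      have h0 : ((Nat.factorial 0:ℂ)⁻¹ * ((Nat.choose 0 2 : ℕ):ℂ)) • (B * N^(0-2)) = 0 := by
        norm_num
      rw [h0, add_zero, Finset.sum_range_succ']
      have h1' : (((Nat.factorial (0+1):ℂ))⁻¹ * (((0+1).choose 2 : ℕ):ℂ)) • (B * N^(0+1-2)) = 0 := by
        norm_num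
      rw [h1', add_zero]
      have : ∀ k ∈ range m, (((k+1+1).factorial:ℂ)⁻¹ * (((k+1+1).choose 2 : ℕ):ℂ)) • (B * N^(k+1+1-2))
          = (2⁻¹:ℂ) • (B * f k) := by
        intro k _
        have e : k+1+1 = k+2 := rfl
        rw [e, hco2, show k+2-2 = k from rfl, hf, mul_smul_comm, smul_smul]
      rw [Finset.sum_congr rfl this, ← Finset.smul_sum, ← Finset.mul_sum, hP2]
    rw [s1, s2, s3, add_mul, add_mul, smul_mul_assoc]
  obtain ⟨u, hu⟩ := hunit
  exact ⟨P, ↑u⁻¹, by rw [← hu]; exact u.mul_inv, by rw [← hu]; exact u.inv_mul, key⟩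

end conj

lemma charpoly_conj' {n : ℕ} (P Q M : Matrix (Fin n) (Fin n) ℂ)
    (h1 : P * Q = 1) (h2 : Q * P = 1) :
    (P * M * Q).charpoly = M.charpoly := by
  have hPQ : (C : ℂ →+* ℂ[X]).mapMatrix P * (C : ℂ →+* ℂ[X]).mapMatrix Q = 1 := by
    rw [← _root_.map_mul, h1, _root_.map_one]
  have hQP : (C : ℂ →+* ℂ[X]).mapMatrix Q * (C : ℂ →+* ℂ[X]).mapMatrix P = 1 := by
    rw [← _root_.map_mul, h2, _root_.map_one]
  have hcm : charmatrix (P * M * Q)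
      = (C : ℂ →+* ℂ[X]).mapMatrix P * charmatrix M * (C : ℂ →+* ℂ[X]).mapMatrix Q := by
    rw [charmatrix, charmatrix, mul_sub, sub_mul]
    congr 1
    · rw [← (scalar_commute (X : ℂ[X]) (fun r' => Commute.all _ _)
        ((C : ℂ →+* ℂ[X]).mapMatrix P)).eq, mul_assoc, hPQ, mul_one]
    · rw [_root_.map_mul, _root_.map_mul]
  rw [Matrix.charpoly, hcm, det_mul, det_mul, Matrix.charpoly]
  have : (((C : ℂ →+* ℂ[X]).mapMatrix P).det) * (charmatrix M).det
      * (((C : ℂ →+* ℂ[X]).mapMatrix Q).det)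
      = (charmatrix M).det * ((((C : ℂ →+* ℂ[X]).mapMatrix P)
        * ((C : ℂ →+* ℂ[X]).mapMatrix Q)).det) := by
    rw [det_mul]; ring
  rw [this, hPQ, det_one, mul_one]

section triangular
variable {n : ℕ}

lemma charpoly_upper (α β : ℂ) : (α • eMat n + β • xMat n).charpoly
    = ∏ k ∈ Finset.range n, (X - C (β * ((n : ℂ) - 1 - 2 * k))) := by
  have htri : (α • eMat n + β • xMat n).BlockTriangular id := by
    intro i j hij
    have hij' : (j:ℕ) < (i:ℕ) := hij
    have h1 : eMat n i j = 0 := by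
      rw [eMat_apply, if_neg (show ¬(j:ℕ) = (i:ℕ)+1 by omega)]
    have h2 : xMat n i j = 0 := by
      rw [xMat]
      exact diagonal_apply_ne _ (fun hc => by subst hc; exact absurd hij' (lt_irrefl _))
    rw [Matrix.add_apply, Matrix.smul_apply, Matrix.smul_apply, h1, h2, smul_zero, smul_zero, add_zero]
  rw [Matrix.charpoly_of_upperTriangular _ htri, ← Fin.prod_univ_eq_prod_range
    (fun k => (X - C (β * ((n : ℂ) - 1 - 2 * (k:ℕ))))) n]
  refine Finset.prod_congr rfl fun i _ => ?_
  congr 1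
  rw [Matrix.add_apply, Matrix.smul_apply, Matrix.smul_apply, eMat_apply, if_neg (by omega), smul_zero, zero_add,
    xMat, diagonal_apply_eq]
  rw [smul_eq_mul]
  congr 1
  push_cast
  ring

lemma charpoly_lower (β γ : ℂ) : (β • (eMat n)ᵀ + γ • xMat n).charpoly
    = ∏ k ∈ Finset.range n, (X - C (γ * ((n : ℂ) - 1 - 2 * k))) := by
  have htri : (β • (eMat n)ᵀ + γ • xMat n).BlockTriangular (OrderDual.toDual) := by
    intro i j hij
    have hij' : (i:ℕ) < (j:ℕ) := hij
    have h1 : (eMat n)ᵀ i j = 0 := by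
      rw [transpose_apply, eMat_apply, if_neg (show ¬(i:ℕ) = (j:ℕ)+1 by omega)]
    have h2 : xMat n i j = 0 := by
      rw [xMat]
      exact diagonal_apply_ne _ (fun hc => by subst hc; exact absurd hij' (lt_irrefl _))
    rw [Matrix.add_apply, Matrix.smul_apply, Matrix.smul_apply, h1, h2, smul_zero, smul_zero, add_zero]
  rw [Matrix.charpoly, det_of_lowerTriangular _ htri.charmatrix, ← Fin.prod_univ_eq_prod_range
    (fun k => (X - C (γ * ((n : ℂ) - 1 - 2 * (k:ℕ))))) n]
  refine Finset.prod_congr rfl fun i _ => ?_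
  rw [charmatrix_apply_eq]
  congr 1
  rw [Matrix.add_apply, Matrix.smul_apply, Matrix.smul_apply, transpose_apply, eMat_apply, if_neg (by omega),
    smul_zero, zero_add, xMat, diagonal_apply_eq]
  rw [smul_eq_mul]
  congr 1
  push_cast
  ring

end triangular

lemma myconj_pow {n : ℕ} (P Q Z : Matrix (Fin n) (Fin n) ℂ)
    (hPQ : P * Q = 1) (hQP : Q * P = 1) :
    ∀ k : ℕ, (Q * Z * P) ^ k = Q * Z ^ k * P := by
  intro k
  induction k with
  | zero => rw [pow_zero, pow_zero, mul_one, hQP]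
  | succ k ih =>
    rw [pow_succ, ih, pow_succ]
    have e : Q * Z ^ k * P * (Q * Z * P) = Q * Z ^ k * ((P * Q) * (Z * P)) := by
      noncomm_ring
    rw [e, hPQ, one_mul]
    noncomm_ring

/-- a nonzero element `M = a·eₙ + b·ẽₙ + c·xₙ` of the principal `sl₂` either
has eigenvalues `t(n−1), t(n−3), …, t(1−n)` for some `t ≠ 0`, or is nilpotent with
`M^{n−1} ≠ 0`. -/
theorem stmt3 (n : ℕ) (hn : 2 ≤ n) (a b c : ℂ) (habc : ¬(a = 0 ∧ b = 0 ∧ c = 0)) :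
    (∃ t : ℂ, t ≠ 0 ∧
      (a • eMat n + b • (eMat n)ᵀ + c • xMat n).charpoly
        = ∏ k ∈ Finset.range n, (Polynomial.X - Polynomial.C (t * ((n : ℂ) - 1 - 2 * k)))) ∨
    (IsNilpotent (a • eMat n + b • (eMat n)ᵀ + c • xMat n) ∧
      (a • eMat n + b • (eMat n)ᵀ + c • xMat n) ^ (n - 1) ≠ 0) := by
  by_cases ha : a = 0
  · by_cases hb : b = 0
    · -- M = c • xMat n, c ≠ 0
      have hc : c ≠ 0 := fun hc => habc ⟨ha, hb, hc⟩
      left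
      refine ⟨c, hc, ?_⟩
      have hM : a • eMat n + b • (eMat n)ᵀ + c • xMat n = (0:ℂ) • eMat n + c • xMat n := by
        rw [ha, hb]; simp
      rw [hM, charpoly_upper]
    · by_cases hc : c = 0
      · -- M = b • (eMat n)ᵀ, nilpotent
        right
        have hM : a • eMat n + b • (eMat n)ᵀ + c • xMat n = b • (eMat n)ᵀ := by
          rw [ha, hc]; simp
        constructor
        · exact ⟨n, by rw [hM, _root_.smul_pow, ← transpose_pow, eMat_pow_n, transpose_zero, smul_zero]⟩
        · rw [hM, _root_.smul_pow, ← transpose_pow]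
          intro hcon
          rcases smul_eq_zero.1 hcon with h | h
          · exact pow_ne_zero _ hb h
          · exact eMat_pow_pred_ne (n := n) (by omega) (transpose_eq_zero.1 h)
      · -- M = b • (eMat n)ᵀ + c • xMat n, lower triangular, c ≠ 0
        left
        refine ⟨c, hc, ?_⟩
        have hM : a • eMat n + b • (eMat n)ᵀ + c • xMat n = b • (eMat n)ᵀ + c • xMat n := by
          rw [ha]; simp
        rw [hM, charpoly_lower]
  · -- a ≠ 0: conjugate by exp(u • Eᵀ)
    obtain ⟨s, hs⟩ := IsAlgClosed.exists_pow_nat_eq (k := ℂ) (c^2 + a*b) (n := 2) (by norm_num)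
    set u : ℂ := (c + s) / a with hu
    have hau : a * u = c + s := by
      rw [hu]; field_simp
    have hcoef : b + 2*c*u - a*u^2 = 0 := by
      have h' : a*(b + 2*c*u - a*u^2) = 0 := by
        have he : a*(b + 2*c*u - a*u^2) = a*b + 2*c*(a*u) - (a*u)^2 := by ring
        rw [he, hau]
        linear_combination -hs
      exact (mul_eq_zero.1 h').resolve_left ha
    have hcau : c - a*u = -s := by
      linear_combination -hau
    set E := eMat n with hE
    set Xm := xMat n with hXm
    set M : Matrix (Fin n) (Fin n) ℂ := a • E + b • Eᵀ + c • Xm with hM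
    set N : Matrix (Fin n) (Fin n) ℂ := u • Eᵀ with hN
    set A : Matrix (Fin n) (Fin n) ℂ := (2*c*u) • Eᵀ - (a*u) • Xm with hA
    set B : Matrix (Fin n) (Fin n) ℂ := (-(2*a*u^2)) • Eᵀ with hB
    have hrel1 : E * Eᵀ - Eᵀ * E = Xm := by rw [hE, hXm]; exact rel1
    have hrel2 : Eᵀ * Xm - Xm * Eᵀ = (2:ℂ) • Eᵀ := by rw [hE, hXm]; exact rel2
    have hEtE : Eᵀ * E = E * Eᵀ - Xm := by rw [← hrel1, sub_sub_cancel]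
    have hXEt : Xm * Eᵀ = Eᵀ * Xm - (2:ℂ) • Eᵀ := by rw [← hrel2, sub_sub_cancel]
    have h1 : N * M = M * N + A := by
      rw [hN, hM, hA]
      simp only [smul_mul_assoc, mul_smul_comm, mul_add, add_mul]
      rw [hEtE, hXEt]
      match_scalars <;> ring
    have h2 : N * A = A * N + B := by
      rw [hN, hA, hB]
      simp only [smul_mul_assoc, mul_smul_comm, mul_sub, sub_mul]
      rw [hXEt]
      match_scalars <;> ring
    have h3 : N * B = B * N := by
      rw [hN, hB]
      simp only [smul_mul_assoc, mul_smul_comm]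
      match_scalars <;> ring
    have hEn : E ^ n = 0 := by rw [hE]; exact eMat_pow_n
    have hNn : N ^ n = 0 := by
      rw [hN, _root_.smul_pow, ← transpose_pow, hEn, transpose_zero, smul_zero]
    obtain ⟨P, Q, hPQ, hQP, hkey⟩ := conj_exists h1 h2 h3 hNn
    have hMAB : M + A + (2⁻¹:ℂ) • B = a • E + (-s) • Xm := by
      rw [hM, hA, hB]
      have hb' : b = a*u^2 - 2*c*u := by linear_combination hcoef
      rw [hb', ← hcau]
      match_scalars <;> ring
    have hMconj : M = Q * (a • E + (-s) • Xm) * P := by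
      have step : P * M = (a • E + (-s) • Xm) * P := by rw [hkey, hMAB]
      calc M = (Q * P) * M := by rw [hQP, one_mul]
      _ = Q * (P * M) := by rw [mul_assoc]
      _ = Q * ((a • E + (-s) • Xm) * P) := by rw [step]
      _ = Q * (a • E + (-s) • Xm) * P := by rw [mul_assoc]
    by_cases hs0 : s = 0
    · -- nilpotent branch
      right
      have hM0 : a • E + (-s) • Xm = a • E := by rw [hs0]; simp
      rw [hMconj, hM0]
      constructor
      · exact ⟨n, by rw [myconj_pow P Q _ hPQ hQP, _root_.smul_pow, hEn, smul_zero,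
          mul_zero, zero_mul]⟩
      · rw [myconj_pow P Q _ hPQ hQP]
        intro hcon
        have hrec : (a • E) ^ (n-1) = P * (Q * (a • E) ^ (n-1) * P) * Q := by
          rw [← mul_assoc, ← mul_assoc, hPQ, one_mul, mul_assoc, hPQ, mul_one]
        rw [hcon, mul_zero, zero_mul] at hrec
        rw [_root_.smul_pow] at hrec
        rcases smul_eq_zero.1 hrec with h | h
        · exact pow_ne_zero _ ha h
        · rw [hE] at h
          exact eMat_pow_pred_ne (by omega) h
    · -- eigenvalue branch
      left
      refine ⟨-s, neg_ne_zero.2 hs0, ?_⟩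
      rw [hMconj, charpoly_conj' Q P _ hQP hPQ, hE, hXm, charpoly_upper]
end

section
/- Let π = (n₁ ≥ ⋯ ≥ n_s) be a partition of n into positive parts and let A = a·E^π + b·Ẽ^π + c·X^π with a, b, c ∈ ℂ. Then |[A,A*]|² = C_π · (|A|⁴ − |tr(A²)|²). In particular, on the standard sl(2,ℂ) of type π the function K(A) = |[A,A*]|²/(|A|⁴ − |tr(A²)|²) is identically equal to C_π wherever |A|⁴ ≠ |tr(A²)|². -/
open Matrix

/-- For a list `l` of block sizes and a position `i` (0-based), `blockOf l i` is the pair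
(size of the block containing position `i`, offset of `i` within that block). -/
def blockOf : List ℕ → ℕ → ℕ × ℕ
  | [], i => (0, i)
  | k :: t, i => if i < k then (k, i) else blockOf t (i - k)

/-- `E^π = diag(e_{n₁},…,e_{n_s})`, block diagonal with blocks given by the partition
`l = (n₁,…,n_s)`, as an `n×n` matrix (where `n = Σ nᵢ`). -/
noncomputable def EpiMat (l : List ℕ) (n : ℕ) : Matrix (Fin n) (Fin n) ℂ :=
  Matrix.of fun i j =>
    if (j : ℕ) = (i : ℕ) + 1 ∧ (blockOf l (i : ℕ)).2 + 1 < (blockOf l (i : ℕ)).1 then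
      (Real.sqrt (((blockOf l (i : ℕ)).2 + 1) *
        ((blockOf l (i : ℕ)).1 - ((blockOf l (i : ℕ)).2 + 1))) : ℂ)
    else 0

/-- `X^π = diag(x_{n₁},…,x_{n_s})`, block diagonal as an `n×n` matrix. -/
noncomputable def XpiMat (l : List ℕ) (n : ℕ) : Matrix (Fin n) (Fin n) ℂ :=
  Matrix.diagonal fun i =>
    ((((blockOf l (i : ℕ)).1 : ℤ) - 1 - 2 * ((blockOf l (i : ℕ)).2 : ℤ) : ℤ) : ℂ)

/-- Squared Frobenius norm `|A|² = tr(A·A*)`. -/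
noncomputable def frobSq {m : Type*} [Fintype m] (A : Matrix m m ℂ) : ℝ :=
  (Matrix.trace (A * Aᴴ)).re

/-- `C_π = 12 / Σ_p (n_p³ − n_p)`. -/
noncomputable def Cpi (l : List ℕ) : ℝ :=
  12 / (l.map fun k => (k : ℝ) ^ 3 - (k : ℝ)).sum

/-- Ness' function `K₀(B) = |[B,B*]|²/|B|⁴`. -/
noncomputable def K0 {m : Type*} [Fintype m] (B : Matrix m m ℂ) : ℝ :=
  frobSq (B * Bᴴ - Bᴴ * B) / (frobSq B) ^ 2

/-- The function `K(B) = |[B,B*]|² / (|B|⁴ − |tr(B²)|²)`. -/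
noncomputable def Kfn {m : Type*} [Fintype m] (B : Matrix m m ℂ) : ℝ :=
  frobSq (B * Bᴴ - Bᴴ * B) / ((frobSq B) ^ 2 - ‖(Matrix.trace (B * B))‖ ^ 2)


section Helpers
open Finset

lemma blockOf_lt' : ∀ (l : List ℕ) (i : ℕ), i < l.sum → (blockOf l i).2 < (blockOf l i).1
  | [], i, h => by simp at h
  | k :: t, i, h => by
    rw [blockOf]
    split
    · simpa
    · exact blockOf_lt' t (i - k) (by simp at h; omega)

lemma blockOf_succ : ∀ (l : List ℕ) (i : ℕ),
    (blockOf l i).2 + 1 < (blockOf l i).1 →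
    blockOf l (i + 1) = ((blockOf l i).1, (blockOf l i).2 + 1)
  | [], i, h => by simp [blockOf] at h
  | k :: t, i, h => by
    by_cases hik : i < k
    · simp only [blockOf, if_pos hik] at h ⊢
      rw [if_pos (by omega)]
    · simp only [blockOf, if_neg hik] at h ⊢
      rw [if_neg (by omega), show i + 1 - k = (i - k) + 1 by omega]
      exact blockOf_succ t (i - k) h

lemma blockOf_succ_lt : ∀ (l : List ℕ) (i : ℕ), i < l.sum →
    (blockOf l i).2 + 1 < (blockOf l i).1 → i + 1 < l.sum
  | [], i, h, _ => by simp at h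
  | k :: t, i, h, hc => by
    simp only [List.sum_cons] at h ⊢
    by_cases hik : i < k
    · simp only [blockOf, if_pos hik] at hc; omega
    · simp only [blockOf, if_neg hik] at hc
      have := blockOf_succ_lt t (i - k) (by omega) hc
      omega

lemma blockOf_zero_snd : ∀ (l : List ℕ), (blockOf l 0).2 = 0
  | [] => rfl
  | k :: t => by
    rw [blockOf]
    split
    · rfl
    · simpa using blockOf_zero_snd t

lemma blockOf_pred : ∀ (l : List ℕ) (i : ℕ), 0 < (blockOf l i).2 →
    blockOf l (i - 1) = ((blockOf l i).1, (blockOf l i).2 - 1)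
  | [], i, h => by simp [blockOf] at h ⊢
  | k :: t, i, h => by
    by_cases hik : i < k
    · simp only [blockOf, if_pos hik] at h ⊢
      rw [if_pos (by omega)]
    · simp only [blockOf, if_neg hik] at h ⊢
      by_cases hik2 : i = k
      · exfalso
        subst hik2
        rw [show i - i = 0 from by omega, blockOf_zero_snd t] at h
        exact absurd h (by omega)
      · rw [if_neg (by omega), show i - 1 - k = (i - k) - 1 by omega]
        exact blockOf_pred t (i - k) h

lemma blockOf_pred_zero : ∀ (l : List ℕ) (i : ℕ), 0 < i → (blockOf l i).2 = 0 →
    (blockOf l (i - 1)).1 ≤ (blockOf l (i - 1)).2 + 1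
  | [], i, _, h => by simp [blockOf] at h ⊢
  | k :: t, i, hi, h => by
    by_cases hik : i < k
    · simp only [blockOf, if_pos hik] at h; omega
    · simp only [blockOf, if_neg hik] at h
      by_cases hik2 : i = k
      · subst hik2
        rw [blockOf, if_pos (by omega)]
        simp; omega
      · rw [blockOf, if_neg (by omega), show i - 1 - k = (i - k) - 1 by omega]
        exact blockOf_pred_zero t (i - k) (by omega) h

lemma sum_blockOf (f : ℕ × ℕ → ℂ) : ∀ (l : List ℕ),
    ∑ i ∈ range l.sum, f (blockOf l i) = (l.map (fun k => ∑ j ∈ range k, f (k, j))).sum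
  | [] => by simp
  | k :: t => by
    simp only [List.sum_cons, List.map_cons]
    rw [Finset.sum_range_add]
    congr 1
    · exact Finset.sum_congr rfl fun i hi => by
        rw [blockOf, if_pos (Finset.mem_range.mp hi)]
    · rw [← sum_blockOf f t]
      exact Finset.sum_congr rfl fun i _ => by
        rw [blockOf, if_neg (by omega), show k + i - k = i by omega]

lemma sumIdZ (k : ℕ) : (∑ j ∈ range k, (j:ℤ)) * 2 = k * (k - 1) := by
  induction k with
  | zero => simp
  | succ m ih => rw [Finset.sum_range_succ]; push_cast; push_cast at ih; linarith

lemma sumSqZ (k : ℕ) : (∑ j ∈ range k, (j:ℤ)^2) * 6 = k * (k - 1) * (2*k - 1) := by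
  induction k with
  | zero => simp
  | succ m ih => rw [Finset.sum_range_succ]; push_cast; push_cast at ih; nlinarith [ih]

lemma s1Z (k : ℕ) : (∑ j ∈ range k, ((j:ℤ)+1) * ((k:ℤ) - ((j:ℤ)+1))) * 6 = (k:ℤ)^3 - (k:ℤ) := by
  have e : ∀ j ∈ range k, ((j:ℤ)+1) * ((k:ℤ) - ((j:ℤ)+1))
      = (k:ℤ)*(j:ℤ) + (k:ℤ) - (j:ℤ)^2 - 2*(j:ℤ) - 1 := fun j _ => by ring
  rw [Finset.sum_congr rfl e]
  simp only [Finset.sum_sub_distrib, Finset.sum_add_distrib, ← Finset.mul_sum,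
    Finset.sum_const, Finset.card_range, nsmul_eq_mul]
  have h1 := sumIdZ k
  have h2 := sumSqZ k
  linear_combination (3*(k:ℤ)-6) * h1 - h2

lemma s2Z (k : ℕ) : (∑ j ∈ range k, ((k:ℤ) - 1 - 2*(j:ℤ))^2) * 3 = (k:ℤ)^3 - (k:ℤ) := by
  have e : ∀ j ∈ range k, ((k:ℤ) - 1 - 2*(j:ℤ))^2
      = ((k:ℤ)-1)^2 - 4*((k:ℤ)-1)*(j:ℤ) + 4*(j:ℤ)^2 := fun j _ => by ring
  rw [Finset.sum_congr rfl e]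
  simp only [Finset.sum_sub_distrib, Finset.sum_add_distrib, ← Finset.mul_sum,
    Finset.sum_const, Finset.card_range, nsmul_eq_mul]
  have h1 := sumIdZ k
  have h2 := sumSqZ k
  linear_combination (-6*((k:ℤ)-1)) * h1 + 2 * h2

lemma sum_if_coe {n : ℕ} (m : ℕ) (g : Fin n → ℂ) :
    (∑ x : Fin n, if (x:ℕ) = m then g x else 0) =
    if h : m < n then g ⟨m, h⟩ else 0 := by
  split_ifs with h
  · rw [Finset.sum_eq_single (⟨m, h⟩ : Fin n)]
    · simp
    · intro x _ hx
      rw [if_neg]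
      exact fun hc => hx (Fin.ext hc)
    · simp
  · apply Finset.sum_eq_zero
    intro x _
    rw [if_neg]
    intro hc
    exact h (hc ▸ x.isLt)

end Helpers
section MatrixLayer
open Matrix Finset

noncomputable def wv (l : List ℕ) (i : ℕ) : ℂ :=
  if (blockOf l i).2 + 1 < (blockOf l i).1 then
    (Real.sqrt (((blockOf l i).2 + 1) * ((blockOf l i).1 - ((blockOf l i).2 + 1))) : ℂ)
  else 0

noncomputable def dv (l : List ℕ) (i : ℕ) : ℂ :=
  ((((blockOf l i).1 : ℤ) - 1 - 2 * ((blockOf l i).2 : ℤ) : ℤ) : ℂ)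

lemma EpiMat_apply (l : List ℕ) (n : ℕ) (i j : Fin n) :
    EpiMat l n i j = if (j:ℕ) = (i:ℕ) + 1 then wv l (i:ℕ) else 0 := by
  simp only [EpiMat, Matrix.of_apply, wv, ite_and]

lemma XpiMat_eq (l : List ℕ) (n : ℕ) :
    XpiMat l n = Matrix.diagonal (fun i : Fin n => dv l (i:ℕ)) := rfl

lemma wv_sq (l : List ℕ) (i : ℕ) (hi : i < l.sum) :
    wv l i * wv l i =
      (((((blockOf l i).2 : ℝ) + 1) * (((blockOf l i).1 : ℝ) - (((blockOf l i).2 : ℝ) + 1)) : ℝ) : ℂ) := by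
  have hv := blockOf_lt' l i hi
  unfold wv
  split_ifs with hc
  · rw [← Complex.ofReal_mul, Real.mul_self_sqrt]
    apply mul_nonneg
    · positivity
    · rw [sub_nonneg]
      have : (blockOf l i).2 + 1 ≤ (blockOf l i).1 := Nat.le_of_lt hc
      exact_mod_cast this
  · have h1 : (blockOf l i).2 + 1 = (blockOf l i).1 := by omega
    have : ((blockOf l i).1 : ℝ) - (((blockOf l i).2 : ℝ) + 1) = 0 := by
      rw [← h1]; push_cast; ring
    rw [this]
    simp

lemma conjT_E (l : List ℕ) (n : ℕ) : (EpiMat l n)ᴴ = (EpiMat l n)ᵀ := by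
  ext i j
  rw [conjTranspose_apply, transpose_apply, EpiMat_apply]
  split_ifs
  · unfold wv
    split_ifs
    · exact Complex.conj_ofReal _
    · exact star_zero _
  · exact star_zero _

lemma conjT_X (l : List ℕ) (n : ℕ) : (XpiMat l n)ᴴ = XpiMat l n := by
  ext i j
  rw [conjTranspose_apply, XpiMat_eq]
  rcases eq_or_ne i j with rfl | h
  · simp only [Matrix.diagonal_apply_eq]
    exact star_intCast _
  · rw [Matrix.diagonal_apply_ne _ (Ne.symm h), Matrix.diagonal_apply_ne _ h, star_zero]

lemma transpose_X (l : List ℕ) (n : ℕ) : (XpiMat l n)ᵀ = XpiMat l n := by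
  rw [XpiMat_eq, Matrix.diagonal_transpose]

lemma L1 (l : List ℕ) (n : ℕ) (hs : l.sum = n) :
    EpiMat l n * (EpiMat l n)ᵀ - (EpiMat l n)ᵀ * EpiMat l n = XpiMat l n := by
  ext i j
  rw [Matrix.sub_apply, mul_apply, mul_apply]
  simp only [transpose_apply, EpiMat_apply]
  by_cases hij : i = j
  · subst hij
    have e1 : ∀ x : Fin n, (if (x:ℕ) = (i:ℕ) + 1 then wv l (i:ℕ) else 0) *
        (if (x:ℕ) = (i:ℕ) + 1 then wv l (i:ℕ) else 0)
        = if (x:ℕ) = (i:ℕ) + 1 then wv l (i:ℕ) * wv l (i:ℕ) else 0 := fun x => by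
      split_ifs <;> simp
    rw [Finset.sum_congr rfl fun x _ => e1 x, sum_if_coe]
    have hin : (i:ℕ) < l.sum := hs ▸ i.isLt
    have hv := blockOf_lt' l (i:ℕ) hin
    set o := (blockOf l (i:ℕ)).2 with ho
    set k := (blockOf l (i:ℕ)).1 with hk
    have hS1 : (if h : (i:ℕ) + 1 < n then wv l (i:ℕ) * wv l (i:ℕ) else 0)
        = ((((o:ℝ) + 1) * ((k:ℝ) - ((o:ℝ) + 1)) : ℝ) : ℂ) := by
      by_cases hc : o + 1 < k
      · rw [dif_pos (hs ▸ blockOf_succ_lt l (i:ℕ) hin hc), wv_sq l (i:ℕ) hin]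
      · have h1 : o + 1 = k := by omega
        have hz : ((k:ℝ) - ((o:ℝ) + 1)) = 0 := by rw [← h1]; push_cast; ring
        have hw : wv l (i:ℕ) = 0 := by unfold wv; rw [if_neg]; exact hc
        rw [hz, hw]
        simp
    rw [hS1]
    -- second sum
    have hS2 : (∑ x : Fin n, (if (i:ℕ) = (x:ℕ) + 1 then wv l (x:ℕ) else 0) *
        (if (i:ℕ) = (x:ℕ) + 1 then wv l (x:ℕ) else 0))
        = (((o:ℝ) * ((k:ℝ) - (o:ℝ)) : ℝ) : ℂ) := by
      by_cases hi0 : (i:ℕ) = 0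
      · have ho0 : o = 0 := by rw [ho, hi0]; exact blockOf_zero_snd l
        rw [Finset.sum_eq_zero, ho0]
        · simp
        · intro x _
          rw [if_neg (by omega)]
          ring
      · have e2 : ∀ x : Fin n, (if (i:ℕ) = (x:ℕ) + 1 then wv l (x:ℕ) else 0) *
            (if (i:ℕ) = (x:ℕ) + 1 then wv l (x:ℕ) else 0)
            = if (x:ℕ) = (i:ℕ) - 1 then wv l (x:ℕ) * wv l (x:ℕ) else 0 := fun x => by
          by_cases hx : (i:ℕ) = (x:ℕ) + 1
          · rw [if_pos hx, if_pos (by omega)]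
          · rw [if_neg hx, if_neg (by omega)]
            ring
        rw [Finset.sum_congr rfl fun x _ => e2 x, sum_if_coe,
          dif_pos (show (i:ℕ) - 1 < n from by omega)]
        by_cases hoz : 0 < o
        · have hpred := blockOf_pred l (i:ℕ) (ho ▸ hoz)
          rw [wv_sq l ((i:ℕ) - 1) (by omega)]
          rw [hpred, ← ho, ← hk]
          push_cast [Nat.cast_sub (by omega : 1 ≤ o)]
          ring_nf
        · have ho0 : o = 0 := by omega
          have hle := blockOf_pred_zero l (i:ℕ) (by omega) (ho ▸ ho0)
          have hw : wv l ((i:ℕ) - 1) = 0 := by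
            unfold wv; rw [if_neg]; omega
          rw [hw, ho0]
          simp
    rw [hS2, XpiMat_eq, Matrix.diagonal_apply_eq]
    unfold dv
    rw [← ho, ← hk]
    push_cast
    ring
  · rw [Finset.sum_eq_zero, Finset.sum_eq_zero, XpiMat_eq,
      Matrix.diagonal_apply_ne _ hij]
    · ring
    · intro x _
      split_ifs <;> first | ring1 | exact absurd (Fin.val_injective (by omega : (i:ℕ) = (j:ℕ))) hij
    · intro x _
      split_ifs <;> first | ring1 | exact absurd (Fin.val_injective (by omega : (i:ℕ) = (j:ℕ))) hij

end MatrixLayer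
section MatrixLayer2
open Matrix Finset

lemma L2 (l : List ℕ) (n : ℕ) :
    XpiMat l n * EpiMat l n - EpiMat l n * XpiMat l n = (2:ℂ) • EpiMat l n := by
  ext i j
  rw [Matrix.sub_apply, Matrix.smul_apply, XpiMat_eq, Matrix.diagonal_mul, Matrix.mul_diagonal,
    EpiMat_apply, smul_eq_mul]
  by_cases hc : (j:ℕ) = (i:ℕ) + 1
  · rw [if_pos hc]
    by_cases hcond : (blockOf l (i:ℕ)).2 + 1 < (blockOf l (i:ℕ)).1
    · have hsucc := blockOf_succ l (i:ℕ) hcond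
      have hdv : dv l (i:ℕ) = dv l (j:ℕ) + 2 := by
        unfold dv
        rw [hc, hsucc]
        push_cast
        ring
      rw [hdv]
      ring
    · have hw : wv l (i:ℕ) = 0 := if_neg hcond
      rw [hw]
      ring
  · rw [if_neg hc]
    ring

lemma L2t (l : List ℕ) (n : ℕ) :
    (EpiMat l n)ᵀ * XpiMat l n - XpiMat l n * (EpiMat l n)ᵀ = (2:ℂ) • (EpiMat l n)ᵀ := by
  have h := congrArg Matrix.transpose (L2 l n)
  rw [Matrix.transpose_sub, Matrix.transpose_mul, Matrix.transpose_mul,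
    Matrix.transpose_smul, transpose_X] at h
  exact h

lemma trE2 (l : List ℕ) (n : ℕ) : Matrix.trace (EpiMat l n * EpiMat l n) = 0 := by
  rw [Matrix.trace]
  apply Finset.sum_eq_zero
  intro i _
  rw [Matrix.diag_apply, mul_apply]
  apply Finset.sum_eq_zero
  intro x _
  rw [EpiMat_apply, EpiMat_apply]
  split_ifs <;> first | ring1 | exact ((by omega : False)).elim

lemma trEX (l : List ℕ) (n : ℕ) : Matrix.trace (EpiMat l n * XpiMat l n) = 0 := by
  rw [Matrix.trace]
  apply Finset.sum_eq_zero
  intro i _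
  rw [Matrix.diag_apply, XpiMat_eq, Matrix.mul_diagonal, EpiMat_apply,
    if_neg (by omega : ¬ (i:ℕ) = (i:ℕ) + 1)]
  ring

lemma trXE (l : List ℕ) (n : ℕ) : Matrix.trace (XpiMat l n * EpiMat l n) = 0 := by
  rw [Matrix.trace_mul_comm]
  exact trEX l n

lemma trEt2 (l : List ℕ) (n : ℕ) :
    Matrix.trace ((EpiMat l n)ᵀ * (EpiMat l n)ᵀ) = 0 := by
  rw [← Matrix.transpose_mul, Matrix.trace_transpose]
  exact trE2 l n

lemma trEtX (l : List ℕ) (n : ℕ) :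
    Matrix.trace ((EpiMat l n)ᵀ * XpiMat l n) = 0 := by
  rw [show (EpiMat l n)ᵀ * XpiMat l n = (XpiMat l n * EpiMat l n)ᵀ by
    rw [Matrix.transpose_mul, transpose_X], Matrix.trace_transpose]
  exact trXE l n

lemma trXEt (l : List ℕ) (n : ℕ) :
    Matrix.trace (XpiMat l n * (EpiMat l n)ᵀ) = 0 := by
  rw [Matrix.trace_mul_comm]
  exact trEtX l n

lemma s1C (k : ℕ) : (∑ j ∈ range k,
    (((((j:ℝ)+1) * ((k:ℝ) - ((j:ℝ)+1))) : ℝ) : ℂ))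
    = ((((k:ℝ)^3 - (k:ℝ))/6 : ℝ) : ℂ) := by
  rw [← Complex.ofReal_sum]
  congr 1
  have h := congrArg (fun z : ℤ => (z : ℝ)) (s1Z k)
  push_cast at h
  linarith

lemma s2C (k : ℕ) : (∑ j ∈ range k,
    (((((k:ℤ) - 1 - 2*(j:ℤ)) : ℤ) : ℂ))^2)
    = ((((k:ℝ)^3 - (k:ℝ))/3 : ℝ) : ℂ) := by
  have h := congrArg (fun z : ℤ => (z : ℂ)) (s2Z k)
  push_cast at h
  push_cast
  linear_combination h / 3

noncomputable def Nr (l : List ℕ) : ℝ := (l.map fun k : ℕ => (k:ℝ)^3 - (k:ℝ)).sum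

lemma CpiEq (l : List ℕ) : Cpi l = 12 / Nr l := by
  unfold Cpi Nr
  congr 2
  induction l with
  | nil => rfl
  | cons a t ih => simpa using ih

lemma listC (l : List ℕ) (c : ℝ) :
    (l.map fun k : ℕ => ((((k:ℝ)^3 - (k:ℝ))/c : ℝ) : ℂ)).sum
    = ((Nr l / c : ℝ) : ℂ) := by
  unfold Nr
  induction l with
  | nil => simp
  | cons a t ih =>
    simp only [List.map_cons, List.sum_cons]
    rw [ih]
    push_cast
    ring

noncomputable def fE : ℕ × ℕ → ℂ :=
  fun p => (((((p.2 : ℝ)+1) * ((p.1 : ℝ) - ((p.2 : ℝ)+1))) : ℝ) : ℂ)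

noncomputable def fX : ℕ × ℕ → ℂ :=
  fun p => ((((p.1:ℤ) - 1 - 2*(p.2:ℤ) : ℤ) : ℂ))^2

lemma trEEt (l : List ℕ) (n : ℕ) (hs : l.sum = n) :
    Matrix.trace (EpiMat l n * (EpiMat l n)ᵀ)
    = ((Nr l / 6 : ℝ) : ℂ) := by
  have key : ∀ i : Fin n, (EpiMat l n * (EpiMat l n)ᵀ) i i
      = ((((((blockOf l (i:ℕ)).2 : ℝ)+1) * (((blockOf l (i:ℕ)).1 : ℝ) - (((blockOf l (i:ℕ)).2 : ℝ)+1))) : ℝ) : ℂ) := by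
    intro i
    rw [mul_apply]
    simp only [transpose_apply, EpiMat_apply]
    have e1 : ∀ x : Fin n, (if (x:ℕ) = (i:ℕ) + 1 then wv l (i:ℕ) else 0) *
        (if (x:ℕ) = (i:ℕ) + 1 then wv l (i:ℕ) else 0)
        = if (x:ℕ) = (i:ℕ) + 1 then wv l (i:ℕ) * wv l (i:ℕ) else 0 := fun x => by
      split_ifs <;> simp
    rw [Finset.sum_congr rfl fun x _ => e1 x, sum_if_coe]
    have hin : (i:ℕ) < l.sum := hs ▸ i.isLt
    have hv := blockOf_lt' l (i:ℕ) hin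
    by_cases hc : (blockOf l (i:ℕ)).2 + 1 < (blockOf l (i:ℕ)).1
    · rw [dif_pos (hs ▸ blockOf_succ_lt l (i:ℕ) hin hc), wv_sq l (i:ℕ) hin]
    · have h1 : (blockOf l (i:ℕ)).2 + 1 = (blockOf l (i:ℕ)).1 := by omega
      have hz : (((blockOf l (i:ℕ)).1:ℝ) - (((blockOf l (i:ℕ)).2:ℝ) + 1)) = 0 := by
        rw [← h1]; push_cast; ring
      have hw : wv l (i:ℕ) = 0 := if_neg hc
      rw [hz, hw]
      simp
  rw [Matrix.trace]
  simp only [Matrix.diag_apply]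
  have key2 : ∀ i : Fin n, (EpiMat l n * (EpiMat l n)ᵀ) i i = fE (blockOf l (i:ℕ)) := by
    intro i
    rw [key i]
    rfl
  rw [Finset.sum_congr rfl fun i _ => key2 i,
    Fin.sum_univ_eq_sum_range (fun m => fE (blockOf l m)) n, ← hs, sum_blockOf]
  rw [show (l.map fun k => ∑ j ∈ range k, fE (k, j))
      = l.map fun k : ℕ => ((((k:ℝ)^3 - (k:ℝ))/6 : ℝ) : ℂ) by
    apply List.map_congr_left
    intro k _
    exact s1C k]
  exact listC l 6

lemma trEtE (l : List ℕ) (n : ℕ) (hs : l.sum = n) :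
    Matrix.trace ((EpiMat l n)ᵀ * EpiMat l n)
    = ((Nr l / 6 : ℝ) : ℂ) := by
  rw [Matrix.trace_mul_comm]
  exact trEEt l n hs

lemma trXX (l : List ℕ) (n : ℕ) (hs : l.sum = n) :
    Matrix.trace (XpiMat l n * XpiMat l n)
    = ((Nr l / 3 : ℝ) : ℂ) := by
  rw [XpiMat_eq, Matrix.diagonal_mul_diagonal, Matrix.trace_diagonal]
  have key : ∀ i : Fin n, (fun i : Fin n => dv l (i:ℕ) * dv l (i:ℕ)) i = fX (blockOf l (i:ℕ)) := by
    intro i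
    show dv l (i:ℕ) * dv l (i:ℕ) = fX (blockOf l (i:ℕ))
    unfold dv fX
    ring
  rw [Finset.sum_congr rfl fun i _ => key i,
    Fin.sum_univ_eq_sum_range (fun m => fX (blockOf l m)) n, ← hs, sum_blockOf]
  rw [show (l.map fun k => ∑ j ∈ range k, fX (k, j))
      = l.map fun k : ℕ => ((((k:ℝ)^3 - (k:ℝ))/3 : ℝ) : ℂ) by
    apply List.map_congr_left
    intro k _
    exact s2C k]
  exact listC l 3

end MatrixLayer2
section Assembly
open Matrix Finset ComplexConjugate

variable (l : List ℕ) (n : ℕ) (a b c : ℂ)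

lemma conjT_Et (l : List ℕ) (n : ℕ) : ((EpiMat l n)ᵀ)ᴴ = EpiMat l n := by
  rw [show ((EpiMat l n)ᵀ)ᴴ = ((EpiMat l n)ᴴ)ᵀ from rfl, conjT_E, Matrix.transpose_transpose]

lemma hAH (hs : l.sum = n) :
    (a • EpiMat l n + b • (EpiMat l n)ᵀ + c • XpiMat l n)ᴴ
    = conj a • (EpiMat l n)ᵀ + conj b • EpiMat l n + conj c • XpiMat l n := by
  simp only [Matrix.conjTranspose_add, Matrix.conjTranspose_smul, conjT_E, conjT_X,
    conjT_Et, Complex.star_def]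

lemma hMcomm (hs : l.sum = n) :
    (a • EpiMat l n + b • (EpiMat l n)ᵀ + c • XpiMat l n) *
      (a • EpiMat l n + b • (EpiMat l n)ᵀ + c • XpiMat l n)ᴴ -
    (a • EpiMat l n + b • (EpiMat l n)ᵀ + c • XpiMat l n)ᴴ *
      (a • EpiMat l n + b • (EpiMat l n)ᵀ + c • XpiMat l n)
    = (a * conj a - b * conj b) • XpiMat l n
      + (2 * (c * conj b - a * conj c)) • EpiMat l n
      + (2 * (b * conj c - c * conj a)) • (EpiMat l n)ᵀ := by
  rw [hAH l n a b c hs]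
  have h1 : (EpiMat l n)ᵀ * EpiMat l n = EpiMat l n * (EpiMat l n)ᵀ - XpiMat l n := by
    rw [← L1 l n hs]; abel
  have h2 : XpiMat l n * EpiMat l n = EpiMat l n * XpiMat l n + (2:ℂ) • EpiMat l n := by
    rw [← L2 l n]; abel
  have h3 : (EpiMat l n)ᵀ * XpiMat l n
      = XpiMat l n * (EpiMat l n)ᵀ + (2:ℂ) • (EpiMat l n)ᵀ := by
    rw [← L2t l n]; abel
  simp only [Matrix.add_mul, Matrix.mul_add, Matrix.smul_mul, Matrix.mul_smul, smul_smul,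
    h1, h2, h3]
  simp only [smul_add, smul_sub, smul_smul]
  module

lemma htrAAH (hs : l.sum = n) :
    Matrix.trace ((a • EpiMat l n + b • (EpiMat l n)ᵀ + c • XpiMat l n) *
      (a • EpiMat l n + b • (EpiMat l n)ᵀ + c • XpiMat l n)ᴴ)
    = (((Nr l / 6) * (Complex.normSq a + Complex.normSq b + 2 * Complex.normSq c) : ℝ) : ℂ) := by
  rw [hAH l n a b c hs]
  simp only [Matrix.add_mul, Matrix.mul_add, Matrix.smul_mul, Matrix.mul_smul, smul_smul,
    Matrix.trace_add, Matrix.trace_smul, trE2, trEX l n, trXE l n, trEt2, trEtX l n,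
    trXEt l n, trEEt l n hs, trEtE l n hs, trXX l n hs, smul_eq_mul, mul_zero, add_zero,
    zero_add, smul_zero]
  push_cast
  simp only [Complex.normSq_eq_conj_mul_self]
  ring

lemma htrAA (hs : l.sum = n) :
    Matrix.trace ((a • EpiMat l n + b • (EpiMat l n)ᵀ + c • XpiMat l n) *
      (a • EpiMat l n + b • (EpiMat l n)ᵀ + c • XpiMat l n))
    = (((Nr l / 3) : ℝ) : ℂ) * (a * b + c ^ 2) := by
  simp only [Matrix.add_mul, Matrix.mul_add, Matrix.smul_mul, Matrix.mul_smul, smul_smul,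
    Matrix.trace_add, Matrix.trace_smul, trE2, trEX l n, trXE l n, trEt2, trEtX l n,
    trXEt l n, trEEt l n hs, trEtE l n hs, trXX l n hs, smul_eq_mul, mul_zero, add_zero,
    zero_add, smul_zero]
  push_cast
  ring

lemma htrMMH (hs : l.sum = n) :
    Matrix.trace (((a * conj a - b * conj b) • XpiMat l n
      + (2 * (c * conj b - a * conj c)) • EpiMat l n
      + (2 * (b * conj c - c * conj a)) • (EpiMat l n)ᵀ) *
      ((a * conj a - b * conj b) • XpiMat l n
      + (2 * (c * conj b - a * conj c)) • EpiMat l n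
      + (2 * (b * conj c - c * conj a)) • (EpiMat l n)ᵀ)ᴴ)
    = (((Nr l / 3) * Complex.normSq (a * conj a - b * conj b)
        + (Nr l / 6) * (Complex.normSq (2 * (c * conj b - a * conj c))
          + Complex.normSq (2 * (b * conj c - c * conj a))) : ℝ) : ℂ) := by
  have hc : ((a * conj a - b * conj b) • XpiMat l n
      + (2 * (c * conj b - a * conj c)) • EpiMat l n
      + (2 * (b * conj c - c * conj a)) • (EpiMat l n)ᵀ)ᴴ
      = conj (a * conj a - b * conj b) • XpiMat l n
      + conj (2 * (c * conj b - a * conj c)) • (EpiMat l n)ᵀ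
      + conj (2 * (b * conj c - c * conj a)) • EpiMat l n := by
    simp only [Matrix.conjTranspose_add, Matrix.conjTranspose_smul, conjT_E, conjT_X,
      conjT_Et, Complex.star_def]
  rw [hc]
  simp only [Matrix.add_mul, Matrix.mul_add, Matrix.smul_mul, Matrix.mul_smul, smul_smul,
    Matrix.trace_add, Matrix.trace_smul, trE2, trEX l n, trXE l n, trEt2, trEtX l n,
    trXEt l n, trEEt l n hs, trEtE l n hs, trXX l n hs, smul_eq_mul, mul_zero, add_zero,
    zero_add, smul_zero]
  push_cast
  simp only [Complex.normSq_eq_conj_mul_self]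
  ring

lemma keyId :
    Complex.normSq (a * conj a - b * conj b)
      + Complex.normSq (2 * (c * conj b - a * conj c))
    = (Complex.normSq a + Complex.normSq b + 2 * Complex.normSq c) ^ 2
      - 4 * Complex.normSq (a * b + c ^ 2) := by
  have cast : ∀ z : ℂ, (Complex.normSq z : ℂ) = z * conj z := fun z => (Complex.mul_conj z).symm
  apply Complex.ofReal_injective
  push_cast
  rw [cast, cast, cast, cast, cast, cast]
  simp only [_root_.map_mul, map_sub, map_add, map_ofNat, map_neg, Complex.conj_conj, map_pow]
  ring

lemma betaConj : 2 * (b * conj c - c * conj a) = conj (2 * (c * conj b - a * conj c)) := by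
  simp only [_root_.map_mul, map_sub, Complex.conj_conj, map_ofNat]
  ring

end Assembly
open Matrix ComplexConjugate in
/-- for `A = a·E^π + b·Ẽ^π + c·X^π` one has
`|[A,A*]|² = C_π · (|A|⁴ − |tr(A²)|²)`; in particular `K ≡ C_π` on the standard
`sl(2,ℂ)` of type `π` wherever `|A|⁴ ≠ |tr(A²)|²`. -/
theorem stmt6 (n : ℕ) (l : List ℕ) (hsort : l.Pairwise (· ≥ ·)) (hpos : ∀ x ∈ l, 0 < x)
    (hsum : l.sum = n) (a b c : ℂ) :
    (frobSq ((a • EpiMat l n + b • (EpiMat l n)ᵀ + c • XpiMat l n) *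
          (a • EpiMat l n + b • (EpiMat l n)ᵀ + c • XpiMat l n)ᴴ -
        (a • EpiMat l n + b • (EpiMat l n)ᵀ + c • XpiMat l n)ᴴ *
          (a • EpiMat l n + b • (EpiMat l n)ᵀ + c • XpiMat l n))
      = Cpi l * ((frobSq (a • EpiMat l n + b • (EpiMat l n)ᵀ + c • XpiMat l n)) ^ 2 -
          ‖(Matrix.trace ((a • EpiMat l n + b • (EpiMat l n)ᵀ + c • XpiMat l n) *
            (a • EpiMat l n + b • (EpiMat l n)ᵀ + c • XpiMat l n)))‖ ^ 2))
    ∧ ((frobSq (a • EpiMat l n + b • (EpiMat l n)ᵀ + c • XpiMat l n)) ^ 2 ≠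
          ‖(Matrix.trace ((a • EpiMat l n + b • (EpiMat l n)ᵀ + c • XpiMat l n) *
            (a • EpiMat l n + b • (EpiMat l n)ᵀ + c • XpiMat l n)))‖ ^ 2 →
        Kfn (a • EpiMat l n + b • (EpiMat l n)ᵀ + c • XpiMat l n) = Cpi l) := by
  have hs : l.sum = n := hsum
  have hβ : Complex.normSq (2 * (b * conj c - c * conj a))
      = Complex.normSq (2 * (c * conj b - a * conj c)) := by
    rw [betaConj]; exact Complex.normSq_conj _
  have main : (frobSq ((a • EpiMat l n + b • (EpiMat l n)ᵀ + c • XpiMat l n) *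
          (a • EpiMat l n + b • (EpiMat l n)ᵀ + c • XpiMat l n)ᴴ -
        (a • EpiMat l n + b • (EpiMat l n)ᵀ + c • XpiMat l n)ᴴ *
          (a • EpiMat l n + b • (EpiMat l n)ᵀ + c • XpiMat l n))
      = Cpi l * ((frobSq (a • EpiMat l n + b • (EpiMat l n)ᵀ + c • XpiMat l n)) ^ 2 -
          ‖(Matrix.trace ((a • EpiMat l n + b • (EpiMat l n)ᵀ + c • XpiMat l n) *
            (a • EpiMat l n + b • (EpiMat l n)ᵀ + c • XpiMat l n)))‖ ^ 2)) := by
    rw [hMcomm l n a b c hs]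
    rw [frobSq, htrMMH l n a b c hs, Complex.ofReal_re]
    rw [frobSq, htrAAH l n a b c hs, Complex.ofReal_re]
    rw [htrAA l n a b c hs, norm_mul, Complex.norm_real, Real.norm_eq_abs, mul_pow, mul_pow, sq_abs, Complex.sq_norm]
    rw [CpiEq l, hβ]
    rcases eq_or_ne (Nr l) 0 with h0 | h0
    · rw [h0]
      simp
    · have expand : 12 / Nr l * ((Nr l / 6) ^ 2 * (Complex.normSq a + Complex.normSq b +
          2 * Complex.normSq c) ^ 2 - (Nr l / 3) ^ 2 * Complex.normSq (a * b + c ^ 2))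
          = Nr l / 3 * ((Complex.normSq a + Complex.normSq b + 2 * Complex.normSq c) ^ 2
            - 4 * Complex.normSq (a * b + c ^ 2)) := by
        field_simp
        ring
      rw [expand, ← keyId a b c]
      ring
  refine ⟨main, fun h => ?_⟩
  rw [Kfn, main, mul_div_assoc, div_self (sub_ne_zero.mpr h), mul_one]
end

section
/- Let A be an n×n complex matrix, let (gᵢ) be a sequence of invertible n×n complex matrices, and let (cᵢ) be a sequence of nonzero complex numbers with |cᵢ| → ∞. If the sequence (1/cᵢ)·gᵢ·A·gᵢ⁻¹ converges to a matrix N, then N is nilpotent. -/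
open Polynomial Matrix Filter Finset

lemma eval_charpoly_det' {m : Type*} [Fintype m] [DecidableEq m]
    (M : Matrix m m ℂ) (r : ℂ) :
    (M.charpoly).eval r = (r • (1 : Matrix m m ℂ) - M).det := by
  rw [Matrix.charpoly, eval_det, Matrix.matPolyEquiv_charmatrix]
  simp [smul_eq_diagonal_mul]


/-- if `(1/cᵢ)·gᵢ·A·gᵢ⁻¹ → N` with `gᵢ` invertible and `|cᵢ| → ∞`, then `N`
is nilpotent. -/
theorem stmt17 (n : ℕ) (A : Matrix (Fin n) (Fin n) ℂ)
    (g : ℕ → Matrix (Fin n) (Fin n) ℂ) (hg : ∀ i, IsUnit (g i))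
    (c : ℕ → ℂ) (hc : ∀ i, c i ≠ 0)
    (hctend : Filter.Tendsto (fun i => ‖c i‖) Filter.atTop Filter.atTop)
    (N : Matrix (Fin n) (Fin n) ℂ)
    (hlim : Filter.Tendsto (fun i => (c i)⁻¹ • (g i * A * (g i)⁻¹))
      Filter.atTop (nhds N)) :
    IsNilpotent N := by
  have hdegA : A.charpoly.natDegree = n := by
    simp [A.charpoly_natDegree_eq_dim]
  have hcoeffn : A.charpoly.coeff n = 1 := by
    have := A.charpoly_monic.coeff_natDegree
    rwa [hdegA] at this
  have hIinv : Tendsto (fun i => (c i)⁻¹) atTop (nhds (0 : ℂ)) := by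
    rw [tendsto_zero_iff_norm_tendsto_zero]
    simpa [Pi.inv_def] using hctend.inv_tendsto_atTop
  have hNdet : ∀ z : ℂ, (z • (1 : Matrix (Fin n) (Fin n) ℂ) - N).det = z ^ n := by
    intro z
    have hcont : Tendsto (fun i => (z • (1 : Matrix (Fin n) (Fin n) ℂ)
        - (c i)⁻¹ • (g i * A * (g i)⁻¹)).det) atTop
        (nhds ((z • (1 : Matrix (Fin n) (Fin n) ℂ) - N).det)) :=
      ((Continuous.matrix_det continuous_id).tendsto _).comp (tendsto_const_nhds.sub hlim)
    have heq : ∀ i, (z • (1 : Matrix (Fin n) (Fin n) ℂ)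
        - (c i)⁻¹ • (g i * A * (g i)⁻¹)).det
        = ∑ k ∈ Finset.range (n + 1),
            (A.charpoly.coeff k * z ^ k) * ((c i)⁻¹) ^ (n - k) := by
      intro i
      have hginv : g i * (g i)⁻¹ = 1 :=
        mul_nonsing_inv _ ((isUnit_iff_isUnit_det _).mp (hg i))
      have h1 : z • (1 : Matrix (Fin n) (Fin n) ℂ) - (c i)⁻¹ • (g i * A * (g i)⁻¹)
          = (c i)⁻¹ • ((c i * z) • (1 : Matrix (Fin n) (Fin n) ℂ)
              - g i * A * (g i)⁻¹) := by
        rw [smul_sub, smul_smul, inv_mul_cancel_left₀ (hc i)]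
      have h2 : ((c i * z) • (1 : Matrix (Fin n) (Fin n) ℂ) - g i * A * (g i)⁻¹)
          = g i * ((c i * z) • (1 : Matrix (Fin n) (Fin n) ℂ) - A) * (g i)⁻¹ := by
        rw [Matrix.mul_sub, Matrix.sub_mul, Matrix.mul_smul, Matrix.smul_mul,
          Matrix.mul_one, hginv]
      have h3 : ((c i * z) • (1 : Matrix (Fin n) (Fin n) ℂ)
          - g i * A * (g i)⁻¹).det = A.charpoly.eval (c i * z) := by
        rw [h2, Matrix.det_mul, Matrix.det_mul, mul_comm ((g i).det),
          mul_assoc, ← Matrix.det_mul, hginv, Matrix.det_one, mul_one,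
          eval_charpoly_det']
      rw [h1, Matrix.det_smul, h3, Fintype.card_fin,
        Polynomial.eval_eq_sum_range, hdegA, Finset.mul_sum]
      refine Finset.sum_congr rfl fun k hk => ?_
      have hkn : k ≤ n := Nat.lt_succ_iff.mp (Finset.mem_range.mp hk)
      have : ((c i)⁻¹) ^ (n - k) = ((c i)⁻¹) ^ n * (c i) ^ k := by
        rw [pow_sub₀ _ (inv_ne_zero (hc i)) hkn]
        rw [inv_pow (c i) k, inv_inv]
      rw [this, mul_pow]
      ring
    have hlim2 : Tendsto (fun i => ∑ k ∈ Finset.range (n + 1),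
        (A.charpoly.coeff k * z ^ k) * ((c i)⁻¹) ^ (n - k)) atTop (nhds (z ^ n)) := by
      have : Tendsto (fun i => ∑ k ∈ Finset.range (n + 1),
          (A.charpoly.coeff k * z ^ k) * ((c i)⁻¹) ^ (n - k)) atTop
          (nhds (∑ k ∈ Finset.range (n + 1),
            (A.charpoly.coeff k * z ^ k) * (0 : ℂ) ^ (n - k))) := by
        refine tendsto_finset_sum _ fun k _ => ?_
        exact tendsto_const_nhds.mul (hIinv.pow _)
      convert this using 2
      rw [Finset.sum_eq_single n]
      · simp [hcoeffn]
      · intro k hk hkn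
        have : n - k ≠ 0 := Nat.sub_ne_zero_of_lt
          (lt_of_le_of_ne (Nat.lt_succ_iff.mp (Finset.mem_range.mp hk)) hkn)
        simp [zero_pow this]
      · intro h; exact absurd (Finset.self_mem_range_succ n) h
    exact tendsto_nhds_unique hcont (by simpa only [heq] using hlim2 : _)
  have hcp : N.charpoly = X ^ n := by
    apply Polynomial.funext
    intro z
    rw [eval_charpoly_det', hNdet, eval_pow, eval_X]
  exact ⟨n, by have h := N.aeval_self_charpoly; rw [hcp] at h; simpa using h⟩
end
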